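/- Let $n\geq 2$ and $f(x) = -\tfrac{1}{4}\ln g(x)$ with $g(x) = x_1 - \sum_{k=2}^n x_k^2/2 > 0$. Define the Tchebychev vector norm by $|T|^2 = \tfrac{1}{4n^2}\sum_{i,j} f^{ij} (\ln D)_i (\ln D)_j$ where $D = \det(\mathrm{Hess}\, f)$ and $(f^{ij})$ is the inverse Hessian. Then $|T|^2 = \tfrac{(n+1)^2}{n^2}$ identically on the domain. -/

import Mathlib

noncomputable section

/-- `g(x) = x₁ - ∑_{k=2}^n x_k²/2` (index `0` plays the role of `1`). -/
def gfun (n : ℕ) [NeZero n] (x : Fin n → ℝ) : ℝ :=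
  x 0 - ∑ k ∈ Finset.univ \ {0}, (x k) ^ 2 / 2

/-- `f(x) = -(1/4) ln g(x)`. -/
def ffun (n : ℕ) [NeZero n] (x : Fin n → ℝ) : ℝ := -(1/4) * Real.log (gfun n x)

/-- Partial derivative in the `i`-th coordinate direction. -/
def pd (n : ℕ) (i : Fin n) (h : (Fin n → ℝ) → ℝ) : (Fin n → ℝ) → ℝ :=
  fun x => fderiv ℝ h x (Pi.single i 1)

/-- The Hessian matrix `(∂²h/∂xᵢ∂xⱼ)`. -/
def Hess (n : ℕ) (h : (Fin n → ℝ) → ℝ) (x : Fin n → ℝ) : Matrix (Fin n) (Fin n) ℝ :=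
  fun i j => pd n i (pd n j h) x

variable (n : ℕ) [NeZero n]
set_option linter.unusedSectionVars false

def Gd (x : Fin n → ℝ) (i : Fin n) : ℝ := if i = 0 then 1 else -(x i)

def P (i : Fin n) : (Fin n → ℝ) →L[ℝ] ℝ :=
  ContinuousLinearMap.proj i

lemma hasFDerivAt_P (i : Fin n) (x : Fin n → ℝ) :
    HasFDerivAt (fun y : Fin n → ℝ => y i) (P n i) x :=
  (ContinuousLinearMap.proj i : (Fin n → ℝ) →L[ℝ] ℝ).hasFDerivAt

@[simp] lemma P_apply (i : Fin n) (y : Fin n → ℝ) : P n i y = y i := rfl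

def glin (x : Fin n → ℝ) : (Fin n → ℝ) →L[ℝ] ℝ :=
  P n 0 - ∑ k ∈ Finset.univ \ {0}, x k • P n k

lemma glin_single (x : Fin n → ℝ) (i : Fin n) : glin n x (Pi.single i 1) = Gd n x i := by
  simp only [glin, Gd, ContinuousLinearMap.sub_apply, ContinuousLinearMap.sum_apply,
    ContinuousLinearMap.smul_apply, P_apply, Pi.single_apply, smul_eq_mul]
  by_cases hi : i = 0
  · subst hi
    rw [if_pos rfl, if_pos rfl]
    rw [Finset.sum_eq_zero, sub_zero]
    intro k hk
    simp only [Finset.mem_sdiff, Finset.mem_singleton] at hk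
    rw [if_neg (by simp [eq_comm, hk.2]), mul_zero]
  · rw [if_neg (by simp [eq_comm, hi]), if_neg hi]
    rw [Finset.sum_eq_single i]
    · simp
    · intro k hk hki
      rw [if_neg hki, mul_zero]
    · intro h
      simp [hi] at h

lemma hasFDerivAt_gfun (x : Fin n → ℝ) : HasFDerivAt (gfun n) (glin n x) x := by
  have h1 := hasFDerivAt_P n 0 x
  have h2 : ∀ k : Fin n, HasFDerivAt (fun y : Fin n → ℝ => (y k) ^ 2 / 2)
      (x k • P n k) x := by
    intro k
    have hp := hasFDerivAt_P n k x
    have := (hp.mul hp).const_mul (1/2 : ℝ)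
    refine HasFDerivAt.congr_fderiv (HasFDerivAt.congr_of_eventuallyEq this (.of_forall fun y => ?_)) ?_
    · simp; ring
    · ext y
      simp only [ContinuousLinearMap.smul_apply, P_apply,
        ContinuousLinearMap.add_apply, smul_eq_mul]
      ring
  have h := h1.sub (HasFDerivAt.fun_sum
    (fun k (_ : k ∈ Finset.univ \ ({0} : Finset (Fin n))) => h2 k))
  exact h

lemma continuous_gfun : Continuous (gfun n) := by
  rw [continuous_iff_continuousAt]
  exact fun x => (hasFDerivAt_gfun n x).continuousAt

lemma isOpen_dom : IsOpen {y : Fin n → ℝ | 0 < gfun n y} :=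
  isOpen_lt continuous_const (continuous_gfun n)

lemma hasFDerivAt_ffun (x : Fin n → ℝ) (hx : 0 < gfun n x) :
    HasFDerivAt (ffun n) ((-(1/(4 * gfun n x))) • glin n x) x := by
  have h := ((hasFDerivAt_gfun n x).log hx.ne').const_mul (-(1/4) : ℝ)
  have he : ffun n = fun y => -(1/4) * Real.log (gfun n y) := rfl
  rw [he]
  refine h.congr_fderiv ?_
  ext y
  simp only [ContinuousLinearMap.smul_apply, smul_eq_mul]
  ring

lemma pd_ffun (j : Fin n) (x : Fin n → ℝ) (hx : 0 < gfun n x) :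
    pd n j (ffun n) x = -(1/(4 * gfun n x)) * Gd n x j := by
  rw [pd, (hasFDerivAt_ffun n x hx).fderiv]
  simp [glin_single]

lemma HasFDerivAt.inv' {f : (Fin n → ℝ) → ℝ} {f' : (Fin n → ℝ) →L[ℝ] ℝ} {x : Fin n → ℝ}
    (hf : HasFDerivAt f f' x) (h0 : f x ≠ 0) :
    HasFDerivAt (fun y => (f y)⁻¹) ((-(f x ^ 2)⁻¹) • f') x :=
  (hasDerivAt_inv h0).comp_hasFDerivAt x hf

def Mmat (x : Fin n → ℝ) : Matrix (Fin n) (Fin n) ℝ :=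
  fun i j => Gd n x i * Gd n x j + gfun n x * (if i = j ∧ j ≠ 0 then 1 else 0)

lemma hasFDerivAt_F (j : Fin n) (x : Fin n → ℝ) (hx : 0 < gfun n x) :
    HasFDerivAt (fun y => -(1/(4 * gfun n y)) * Gd n y j)
      (((Gd n x j)/(4 * (gfun n x)^2)) • glin n x
        + (if j = 0 then 0 else (1/(4*gfun n x)) • P n j)) x := by
  have h4 : (4 : ℝ) * gfun n x ≠ 0 := by positivity
  by_cases hj : j = 0
  · subst hj
    have h := (HasFDerivAt.inv' n ((hasFDerivAt_gfun n x).const_mul (4:ℝ)) h4).neg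
    refine HasFDerivAt.congr_fderiv (HasFDerivAt.congr_of_eventuallyEq h (.of_forall fun y => ?_)) ?_
    · simp [Gd]
    · ext y
      simp only [if_pos rfl, add_zero, ContinuousLinearMap.smul_apply,
        ContinuousLinearMap.neg_apply, smul_eq_mul, Gd, if_pos rfl, if_true,
        ContinuousLinearMap.add_apply, ContinuousLinearMap.zero_apply]
      field_simp
  · have h := (hasFDerivAt_P n j x).mul
      (HasFDerivAt.inv' n ((hasFDerivAt_gfun n x).const_mul (4:ℝ)) h4)
    refine HasFDerivAt.congr_fderiv (HasFDerivAt.congr_of_eventuallyEq h (.of_forall fun y => ?_)) ?_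
    · simp only [Gd, if_neg hj, Pi.mul_apply]
      field_simp
    · ext y
      simp only [if_neg hj, ContinuousLinearMap.add_apply, ContinuousLinearMap.smul_apply,
        ContinuousLinearMap.neg_apply, P_apply, smul_eq_mul, Gd, if_neg hj]
      field_simp

lemma hess_eq (x : Fin n → ℝ) (hx : 0 < gfun n x) :
    Hess n (ffun n) x = (4 * (gfun n x)^2)⁻¹ • Mmat n x := by
  funext i j
  have hev : pd n j (ffun n) =ᶠ[nhds x] (fun y => -(1/(4 * gfun n y)) * Gd n y j) := by
    filter_upwards [(isOpen_dom n).mem_nhds hx] with y hy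
    exact pd_ffun n j y hy
  have : Hess n (ffun n) x i j
      = fderiv ℝ (fun y => -(1/(4 * gfun n y)) * Gd n y j) x (Pi.single i 1) := by
    rw [Hess, pd, hev.fderiv_eq]
  rw [this, (hasFDerivAt_F n j x hx).fderiv]
  simp only [ContinuousLinearMap.add_apply, ContinuousLinearMap.smul_apply, glin_single,
    smul_eq_mul, Matrix.smul_apply, Mmat]
  by_cases hj : j = 0
  · subst hj
    simp only [if_pos rfl, ContinuousLinearMap.zero_apply, add_zero, ne_eq,
      not_true_eq_false, and_false, if_false, if_true, ite_true, mul_zero, Gd]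
    by_cases hi : i = 0
    · subst hi; rw [if_pos rfl]; field_simp
    · rw [if_neg hi]; field_simp
  · rw [if_neg hj]
    simp only [ContinuousLinearMap.smul_apply, P_apply, Pi.single_apply, smul_eq_mul]
    by_cases hij : i = j
    · rw [if_pos hij.symm, if_pos ⟨hij, hj⟩]
      field_simp
    · rw [if_neg (fun h => hij h.symm), if_neg (by tauto)]
      field_simp

def Lmat (x : Fin n → ℝ) : Matrix (Fin n) (Fin n) ℝ :=
  fun i j => if j = 0 then Gd n x i else if i = j then 1 else 0

def Umat (x : Fin n → ℝ) : Matrix (Fin n) (Fin n) ℝ :=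
  fun i j => if i = 0 then Gd n x j else if i = j then gfun n x else 0

lemma M_eq_LU (x : Fin n → ℝ) : Mmat n x = Lmat n x * Umat n x := by
  funext i j
  rw [Matrix.mul_apply]
  by_cases hi : i = 0
  · subst hi
    rw [Finset.sum_eq_single 0]
    · by_cases hj : j = 0
      · subst hj; simp [Lmat, Umat, Mmat, Gd]
      · have h0 : ¬ (0 : Fin n) = j := fun h => hj h.symm
        simp [Lmat, Umat, Mmat, Gd, hj, h0]
    · intro m _ hm
      have h0 : ¬ (0 : Fin n) = m := fun h => hm h.symm
      simp [Lmat, hm, h0]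
    · simp
  · have key : ∀ m : Fin n, Lmat n x i m * Umat n x m j
        = (if m = 0 then Gd n x i * Gd n x j else 0)
          + (if m = i then (if i = j then gfun n x else 0) else 0) := by
      intro m
      by_cases hm : m = 0
      · subst hm
        have h0 : ¬ (0 : Fin n) = i := fun h => hi h.symm
        simp [Lmat, Umat, hi, h0]
      · by_cases hmi : m = i
        · subst hmi
          simp [Lmat, Umat, hm]
        · have h1 : ¬ i = m := fun h => hmi h.symm
          simp [Lmat, Umat, hm, hmi, h1]
    rw [Finset.sum_congr rfl (fun m _ => key m), Finset.sum_add_distrib]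
    simp only [Finset.sum_ite_eq', Finset.mem_univ, if_true]
    simp only [Mmat, hi, Gd, ne_eq]
    by_cases hij : i = j
    · subst hij
      simp [hi]
    · simp [hij]

lemma det_Mmat (x : Fin n → ℝ) : (Mmat n x).det = gfun n x ^ (n - 1) := by
  rw [M_eq_LU, Matrix.det_mul]
  have hL : (Lmat n x).det = 1 := by
    rw [Matrix.det_of_lowerTriangular (Lmat n x)]
    · rw [Finset.prod_eq_one]
      intro i _
      by_cases hi : i = 0 <;> simp [Lmat, hi, Gd]
    · intro i j hij
      have hij' : i < j := hij
      have h1 : ¬ j = 0 := by rintro rfl; exact absurd hij' (not_lt.mpr (Fin.zero_le i))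
      have h2 : ¬ i = j := ne_of_lt hij'
      simp [Lmat, h1, h2]
  have hU : (Umat n x).det = gfun n x ^ (n - 1) := by
    rw [Matrix.det_of_upperTriangular]
    · rw [Finset.prod_eq_prod_diff_singleton_mul (Finset.mem_univ (0 : Fin n))]
      have hc : ∀ i ∈ Finset.univ \ {(0 : Fin n)}, Umat n x i i = gfun n x := by
        intro i hi
        simp only [Finset.mem_sdiff, Finset.mem_singleton] at hi
        simp [Umat, hi.2]
      rw [Finset.prod_congr rfl hc, Finset.prod_const]
      have hcard : (Finset.univ \ {(0 : Fin n)}).card = n - 1 := by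
        rw [Finset.card_sdiff_of_subset (by simp)]
        simp
      rw [hcard]
      simp [Umat, Gd]
    · intro i j hij
      have hij' : j < i := hij
      have h1 : ¬ i = 0 := by rintro rfl; exact absurd hij' (not_lt.mpr (Fin.zero_le j))
      have h2 : ¬ i = j := (ne_of_lt hij').symm
      simp [Umat, h1, h2]
  rw [hL, hU, one_mul]

lemma det_hess (x : Fin n → ℝ) (hx : 0 < gfun n x) :
    (Hess n (ffun n) x).det = (4 * gfun n x ^ 2)⁻¹ ^ n * gfun n x ^ (n - 1) := by
  rw [hess_eq n x hx, Matrix.det_smul, det_Mmat]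
  simp

lemma logdet_eq (y : Fin n → ℝ) (hy : 0 < gfun n y) :
    Real.log ((Hess n (ffun n) y).det)
      = -((n : ℝ) * Real.log (4 * gfun n y ^ 2)) + ((n - 1 : ℕ) : ℝ) * Real.log (gfun n y) := by
  have h1 : ((4 : ℝ) * gfun n y ^ 2)⁻¹ ^ n ≠ 0 := by positivity
  have h2 : gfun n y ^ (n - 1) ≠ 0 := by positivity
  rw [det_hess n y hy, Real.log_mul h1 h2, Real.log_pow, Real.log_pow, Real.log_inv]
  ring

lemma pd_logdet (hn : 1 ≤ n) (i : Fin n) (x : Fin n → ℝ) (hx : 0 < gfun n x) :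
    pd n i (fun y => Real.log (Hess n (ffun n) y).det) x
      = -((n : ℝ) + 1) / gfun n x * Gd n x i := by
  have h4 : (4 : ℝ) * gfun n x ^ 2 ≠ 0 := by positivity
  have hg2 : HasFDerivAt (fun y => 4 * gfun n y ^ 2) ((4 * (2 * gfun n x)) • glin n x) x := by
    have h := (((hasFDerivAt_gfun n x).mul (hasFDerivAt_gfun n x))).const_mul (4 : ℝ)
    refine HasFDerivAt.congr_fderiv (HasFDerivAt.congr_of_eventuallyEq h (.of_forall fun y => ?_)) ?_
    · simp; ring
    · ext y
      simp only [ContinuousLinearMap.smul_apply, ContinuousLinearMap.add_apply, smul_eq_mul]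
      ring
  have hlog1 := hg2.log h4
  have hlog2 := (hasFDerivAt_gfun n x).log hx.ne'
  have hsum := ((hlog1.const_mul ((n : ℝ))).fun_neg).fun_add (hlog2.const_mul (((n - 1 : ℕ) : ℝ)))
  have hev : (fun y => Real.log (Hess n (ffun n) y).det) =ᶠ[nhds x]
      (fun y => -((n : ℝ) * Real.log (4 * gfun n y ^ 2))
        + ((n - 1 : ℕ) : ℝ) * Real.log (gfun n y)) := by
    filter_upwards [(isOpen_dom n).mem_nhds hx] with y hy
    exact logdet_eq n y hy
  rw [pd, hev.fderiv_eq, hsum.fderiv]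
  simp only [ContinuousLinearMap.add_apply, ContinuousLinearMap.neg_apply,
    ContinuousLinearMap.smul_apply, glin_single, smul_eq_mul]
  rw [Nat.cast_sub hn, Nat.cast_one]
  field_simp
  ring

def Nmat (x : Fin n → ℝ) : Matrix (Fin n) (Fin n) ℝ :=
  fun i j => if i = 0 then (if j = 0 then 2 * x 0 - gfun n x else x j)
    else if j = 0 then x i else if i = j then 1 else 0

lemma gfun_eq (x : Fin n → ℝ) :
    gfun n x = x 0 - (∑ m ∈ Finset.univ \ {0}, (x m) ^ 2) / 2 := by
  rw [gfun, Finset.sum_div]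

lemma M_mul_N (x : Fin n → ℝ) :
    Mmat n x * Nmat n x = gfun n x • (1 : Matrix (Fin n) (Fin n) ℝ) := by
  funext i j
  rw [Matrix.mul_apply,
    Finset.sum_eq_sum_sdiff_singleton_add (Finset.mem_univ (0 : Fin n))]
  by_cases hi : i = 0
  · subst hi
    by_cases hj : j = 0
    · subst hj
      have hc : ∀ m ∈ Finset.univ \ {(0 : Fin n)},
          Mmat n x 0 m * Nmat n x m 0 = -((x m) ^ 2) := by
        intro m hm
        simp only [Finset.mem_sdiff, Finset.mem_singleton] at hm
        simp only [Mmat, Nmat, Gd, if_true, ite_true, if_pos rfl, if_neg hm.2, one_mul]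
        have h0 : ¬ ((0 : Fin n) = m ∧ m ≠ 0) := by tauto
        rw [if_neg h0]
        ring
      rw [Finset.sum_congr rfl hc]
      simp only [Mmat, Nmat, Gd, if_true, ite_true, if_pos rfl, Matrix.smul_apply, Matrix.one_apply_eq,
        smul_eq_mul, mul_one]
      rw [Finset.sum_neg_distrib]
      rw [if_neg (show ¬ (True ∧ (0 : Fin n) ≠ 0) by simp), gfun_eq]
      ring
    · have hc : ∀ m ∈ Finset.univ \ {(0 : Fin n)},
          Mmat n x 0 m * Nmat n x m j = if m = j then -(x j) else 0 := by
        intro m hm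
        simp only [Finset.mem_sdiff, Finset.mem_singleton] at hm
        simp only [Mmat, Nmat, Gd, if_true, ite_true, if_pos rfl, if_neg hm.2, if_neg hj, one_mul]
        have h0 : ¬ ((0 : Fin n) = m ∧ m ≠ 0) := by tauto
        rw [if_neg h0]
        by_cases hmj : m = j
        · subst hmj; rw [if_pos rfl, if_pos rfl]; ring
        · rw [if_neg hmj, if_neg hmj]; ring
      rw [Finset.sum_congr rfl hc, Finset.sum_ite_eq']
      have hjm : j ∈ Finset.univ \ {(0 : Fin n)} := by simp [hj]
      rw [if_pos hjm]
      simp only [Mmat, Nmat, Gd, if_true, ite_true, if_pos rfl, if_neg hj, one_mul, Matrix.smul_apply,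
        Matrix.one_apply_ne (fun h => hj h.symm), smul_eq_mul, mul_zero]
      rw [if_neg (show ¬ (True ∧ (0 : Fin n) ≠ 0) by simp)]
      ring
  · by_cases hj : j = 0
    · subst hj
      have hc : ∀ m ∈ Finset.univ \ {(0 : Fin n)},
          Mmat n x i m * Nmat n x m 0 = x i * (x m) ^ 2 + (if i = m then gfun n x * x m else 0) := by
        intro m hm
        simp only [Finset.mem_sdiff, Finset.mem_singleton] at hm
        simp only [Mmat, Nmat, Gd, if_true, ite_true, if_neg hi, if_neg hm.2]
        by_cases him : i = m
        · subst him
          rw [if_pos ⟨rfl, hm.2⟩, if_pos rfl]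
          ring
        · rw [if_neg (by tauto), if_neg him]
          ring
      rw [Finset.sum_congr rfl hc, Finset.sum_add_distrib, Finset.sum_ite_eq]
      have him : i ∈ Finset.univ \ {(0 : Fin n)} := by simp [hi]
      rw [if_pos him, ← Finset.mul_sum]
      simp only [Mmat, Nmat, Gd, if_true, ite_true, if_neg hi, if_pos rfl, Matrix.smul_apply,
        Matrix.one_apply_ne hi, smul_eq_mul, mul_zero]
      have h0 : ¬ (i = 0 ∧ (0 : Fin n) ≠ 0) := by tauto
      rw [if_neg h0, gfun_eq]
      ring
    · have hc : ∀ m ∈ Finset.univ \ {(0 : Fin n)},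
          Mmat n x i m * Nmat n x m j
            = if m = j then x i * x j + (if i = j then gfun n x else 0) else 0 := by
        intro m hm
        simp only [Finset.mem_sdiff, Finset.mem_singleton] at hm
        simp only [Mmat, Nmat, Gd, if_true, ite_true, if_neg hi, if_neg hm.2, if_neg hj]
        by_cases hmj : m = j
        · subst hmj
          rw [if_pos rfl, if_pos rfl]
          by_cases him : i = m
          · subst him
            rw [if_pos ⟨rfl, hm.2⟩, if_pos rfl]
            ring
          · rw [if_neg (by tauto), if_neg him]
            ring
        · rw [if_neg hmj, if_neg hmj]
          by_cases him : i = m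
          · subst him
            rw [if_pos ⟨rfl, hm.2⟩]
            ring
          · rw [if_neg (by tauto)]
            ring
      rw [Finset.sum_congr rfl hc, Finset.sum_ite_eq']
      have hjm : j ∈ Finset.univ \ {(0 : Fin n)} := by simp [hj]
      rw [if_pos hjm]
      simp only [Mmat, Nmat, Gd, if_true, ite_true, if_neg hi, if_pos rfl, if_neg hj, Matrix.smul_apply,
        smul_eq_mul]
      have h0 : ¬ (i = 0 ∧ (0 : Fin n) ≠ 0) := by tauto
      rw [if_neg h0]
      by_cases hij : i = j
      · subst hij
        rw [if_pos rfl, Matrix.one_apply_eq]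
        ring
      · rw [if_neg hij, Matrix.one_apply_ne hij]
        ring

lemma hess_inv (x : Fin n → ℝ) (hx : 0 < gfun n x) :
    (Hess n (ffun n) x)⁻¹ = (4 * gfun n x) • Nmat n x := by
  apply Matrix.inv_eq_right_inv
  rw [hess_eq n x hx, Matrix.smul_mul, Matrix.mul_smul, M_mul_N, smul_smul, smul_smul]
  have h1 : (4 * gfun n x ^ 2)⁻¹ * (4 * gfun n x) * gfun n x = 1 := by
    field_simp
  rw [h1, one_smul]

lemma key_sum (x : Fin n → ℝ) :
    ∑ i, ∑ j, Nmat n x i j * Gd n x i * Gd n x j = gfun n x := by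
  rw [Finset.sum_eq_sum_sdiff_singleton_add (Finset.mem_univ (0 : Fin n))]
  have houter : ∀ i ∈ Finset.univ \ {(0 : Fin n)},
      (∑ j, Nmat n x i j * Gd n x i * Gd n x j) = 0 := by
    intro i hi
    simp only [Finset.mem_sdiff, Finset.mem_singleton] at hi
    rw [Finset.sum_eq_sum_sdiff_singleton_add (Finset.mem_univ (0 : Fin n))]
    have hc : ∀ j ∈ Finset.univ \ {(0 : Fin n)},
        Nmat n x i j * Gd n x i * Gd n x j
          = if j = i then Gd n x i * Gd n x i else 0 := by
      intro j hj
      simp only [Finset.mem_sdiff, Finset.mem_singleton] at hj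
      simp only [Nmat, if_neg hi.2, if_neg hj.2]
      by_cases hij : i = j
      · subst hij
        rw [if_pos rfl, if_pos rfl]
        ring
      · rw [if_neg hij, if_neg (fun h => hij h.symm)]
        ring
    rw [Finset.sum_congr rfl hc, Finset.sum_ite_eq']
    rw [if_pos (by simp [hi.2])]
    simp only [Nmat, Gd, if_neg hi.2, if_pos rfl, if_true, ite_true]
    ring
  rw [Finset.sum_eq_zero houter, zero_add]
  rw [Finset.sum_eq_sum_sdiff_singleton_add (Finset.mem_univ (0 : Fin n))]
  have hc : ∀ j ∈ Finset.univ \ {(0 : Fin n)},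
      Nmat n x 0 j * Gd n x 0 * Gd n x j = -((x j) ^ 2) := by
    intro j hj
    simp only [Finset.mem_sdiff, Finset.mem_singleton] at hj
    simp only [Nmat, Gd, if_pos rfl, if_neg hj.2, if_true, ite_true]
    ring
  rw [Finset.sum_congr rfl hc, Finset.sum_neg_distrib]
  simp only [Nmat, Gd, if_pos rfl, if_true, ite_true]
  rw [gfun_eq]
  ring

/-- the squared norm of the Tchebychev vector field,
`|T|² = (1/(4n²)) ∑ f^{ij} (ln D)ᵢ (ln D)ⱼ`, equals `(n+1)²/n²` on `Ω`. -/
theorem tchebychev_norm (n : ℕ) [NeZero n] (hn : 2 ≤ n)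
    (x : Fin n → ℝ) (hx : 0 < gfun n x) :
    (1 / (4 * (n : ℝ) ^ 2)) *
        ∑ i, ∑ j, (Hess n (ffun n) x)⁻¹ i j *
          pd n i (fun y => Real.log (Hess n (ffun n) y).det) x *
          pd n j (fun y => Real.log (Hess n (ffun n) y).det) x =
      ((n : ℝ) + 1) ^ 2 / (n : ℝ) ^ 2 := by
  have hn1 : 1 ≤ n := le_trans (by norm_num) hn
  have hg : gfun n x ≠ 0 := hx.ne'
  have hnR : (n : ℝ) ≠ 0 := Nat.cast_ne_zero.mpr (NeZero.ne n)
  set c : ℝ := -((n : ℝ) + 1) / gfun n x with hc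
  have hterm : ∀ i j : Fin n,
      (Hess n (ffun n) x)⁻¹ i j *
          pd n i (fun y => Real.log (Hess n (ffun n) y).det) x *
          pd n j (fun y => Real.log (Hess n (ffun n) y).det) x
        = (4 * gfun n x * c ^ 2) * (Nmat n x i j * Gd n x i * Gd n x j) := by
    intro i j
    rw [hess_inv n x hx, pd_logdet n hn1 i x hx, pd_logdet n hn1 j x hx]
    simp only [Matrix.smul_apply, smul_eq_mul, ← hc]
    ring
  simp only [hterm]
  simp only [← Finset.mul_sum]
  rw [key_sum, hc]
  field_simp
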